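/- Let π : A → B(H) be non-degenerate with WE(π) ≠ ∅, φ ∈ WE(π) with minimal Stinespring dilation φ = V* ρ(·) V on K, and suppose φ = λφ₁ + (1−λ)φ₂ with φ₁, φ₂ ∈ WE(π), 0 < λ < 1. Writing λφ₁ = V* T ρ(·) V with T ∈ ρ(B(H))', 0 ≤ T ≤ 1_K, via Arveson's Radon–Nikodym theorem, the compression of T to the closed subspace [ρ(π(A))VH] equals λ times the identity on that subspace: P T restricted to [ρ(π(A))VH] is λ·1. -/

import Mathlib

/-!
On generators, moving `ρ(π b)` across `T ∈ ρ(B(H))'` and using `V* T ρ(·) V = λφ₁` and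
`V* ρ(·) V = φ`, where `φ₁` and `φ` both fix `π(A)`, gives
`⟪T ρ(π a)Vh, ρ(π b)Vk⟫ = λ⟪π a h, π b k⟫ = λ⟪ρ(π a)Vh, ρ(π b)Vk⟫`.
Both sides are continuous and (conjugate-)linear in each argument, so the identity extends to the
closed span.
-/

noncomputable section
open ContinuousLinearMap

/-- Complete positivity via matrix amplifications. -/
def IsCPMap {A B : Type*} [NonUnitalRing A] [StarRing A] [Module ℂ A]
    [NonUnitalRing B] [StarRing B] [Module ℂ B] (φ : A →ₗ[ℂ] B) : Prop :=
  ∀ (n : ℕ) (a : Matrix (Fin n) (Fin n) A),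
    (∃ b : Matrix (Fin n) (Fin n) A, a = star b * b) →
      ∃ c : Matrix (Fin n) (Fin n) B, a.map φ = star c * c

variable {A : Type*} [CStarAlgebra A]
variable {H K : Type*} [NormedAddCommGroup H] [InnerProductSpace ℂ H] [CompleteSpace H]
  [NormedAddCommGroup K] [InnerProductSpace ℂ K] [CompleteSpace K]

/-- The set of weak expectations of a representation `π`. -/
def WeakExp (π : A →⋆ₐ[ℂ] (H →L[ℂ] H)) :
    Set ((H →L[ℂ] H) →ₗ[ℂ] (H →L[ℂ] H)) :=
  {θ | IsCPMap θ ∧ θ 1 = 1 ∧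
    (∀ S, θ S ∈ Set.centralizer (Set.centralizer (Set.range (⇑π)))) ∧
    ∀ a, θ (π a) = π a}

/-- Non-degeneracy of a representation. -/
def Nondeg (π : A →⋆ₐ[ℂ] (H →L[ℂ] H)) : Prop :=
  (Submodule.span ℂ {x : H | ∃ a, ∃ h : H, π a h = x}).topologicalClosure = ⊤

/-- The map `X ↦ V* (T ∘ X) V`, as a linear map. -/
def conjMap (V : H →L[ℂ] K) (T : K →L[ℂ] K) : (K →L[ℂ] K) →ₗ[ℂ] (H →L[ℂ] H) where
  toFun X := (adjoint V) ∘L (T ∘L (X ∘L V))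
  map_add' X Y := by simp [add_comp, comp_add]
  map_smul' c X := by simp [smul_comp, comp_smul]

section InnerClosure

variable {𝕜 E : Type*} [RCLike 𝕜] [NormedAddCommGroup E] [InnerProductSpace 𝕜 E]

theorem inner_apply_eq_mul_inner_of_mem_closure_span {s : Set E} (T : E →L[𝕜] E) (c : 𝕜)
    (h : ∀ x ∈ s, ∀ y ∈ s, inner 𝕜 (T x) y = c * inner 𝕜 x y) :
    ∀ x ∈ (Submodule.span 𝕜 s).topologicalClosure, ∀ y ∈ (Submodule.span 𝕜 s).topologicalClosure,
      inner 𝕜 (T x) y = c * inner 𝕜 x y := by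
  have h_left : ∀ x ∈ s, ∀ y ∈ (Submodule.span 𝕜 s).topologicalClosure,
      inner 𝕜 (T x) y = c * inner 𝕜 x y := fun x hx y hy =>
    ContinuousLinearMap.eqOn_closure_span (f := innerSL 𝕜 (T x)) (g := c • innerSL 𝕜 x)
      (fun y hy => by simpa using h x hx y hy) hy
  intro x hx y hy
  exact ContinuousLinearMap.eqOn_closure_span (f := (innerSLFlip 𝕜 y).comp T)
    (g := c • innerSLFlip 𝕜 y) (fun x hx => by simpa using h_left x hx y hy) hx

end InnerClosure

theorem inner_apply_map_apply_map_of_mem_centralizer {B : Type*} [Ring B] [StarRing B]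
    [Algebra ℂ B] (ρ : B →⋆ₐ[ℂ] (K →L[ℂ] K)) {T : K →L[ℂ] K}
    (hT : T ∈ Set.centralizer (Set.range ρ)) (S₁ S₂ : B) (x y : K) :
    inner ℂ (T (ρ S₁ x)) (ρ S₂ y) = inner ℂ (T (ρ (star S₂ * S₁) x)) y := by
  rw [← adjoint_inner_left, ← star_eq_adjoint, ← map_star, map_mul, mul_apply_eq_comp,
    ← mul_apply_eq_comp (ρ (star S₂)) T, hT _ ⟨star S₂, rfl⟩, mul_apply_eq_comp]

theorem inner_apply_star_mul_of_fixes {B : Type*} [Ring B] [StarRing B] [Algebra ℂ B]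
    (π : B →⋆ₐ[ℂ] (H →L[ℂ] H)) (θ : (H →L[ℂ] H) →ₗ[ℂ] (H →L[ℂ] H))
    (hθ : ∀ a, θ (π a) = π a) (a b : B) (h k : H) :
    inner ℂ (θ (star (π b) * π a) h) k = inner ℂ (π a h) (π b k) := by
  rw [← map_star, ← map_mul, hθ, map_mul, mul_apply_eq_comp, map_star,
    star_eq_adjoint, adjoint_inner_left]

theorem compression_is_scalar_general
    (π : A →⋆ₐ[ℂ] (H →L[ℂ] H))
    (φ : (H →L[ℂ] H) →ₗ[ℂ] (H →L[ℂ] H)) (hφ : φ ∈ WeakExp π)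
    (ρ : (H →L[ℂ] H) →⋆ₐ[ℂ] (K →L[ℂ] K)) (V : H →L[ℂ] K)
    (hdil : ∀ S, φ S = (adjoint V) ∘L ((ρ S) ∘L V))
    (φ₁ : (H →L[ℂ] H) →ₗ[ℂ] (H →L[ℂ] H)) (hφ₁ : φ₁ ∈ WeakExp π)
    (l : ℝ)
    (T : K →L[ℂ] K) (hT : T ∈ Set.centralizer (Set.range (⇑ρ)))
    (hTφ₁ : (conjMap V T).comp ρ.toLinearMap = (l : ℂ) • φ₁) :
    ∀ x ∈ (Submodule.span ℂ
        {x : K | ∃ a, ∃ h : H, ρ (π a) (V h) = x}).topologicalClosure,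
    ∀ y ∈ (Submodule.span ℂ
        {x : K | ∃ a, ∃ h : H, ρ (π a) (V h) = x}).topologicalClosure,
      (inner ℂ (T x) y : ℂ) = (l : ℂ) * (inner ℂ x y : ℂ) := by
  obtain ⟨-, -, -, hφπ⟩ := hφ
  obtain ⟨-, -, -, hφ₁π⟩ := hφ₁
  refine inner_apply_eq_mul_inner_of_mem_closure_span T (l : ℂ) ?_
  rintro _ ⟨a, h, rfl⟩ _ ⟨b, k, rfl⟩
  have hTφ₁_apply : conjMap V T (ρ (star (π b) * π a)) = (l : ℂ) • φ₁ (star (π b) * π a) :=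
    LinearMap.congr_fun hTφ₁ _
  calc inner ℂ (T (ρ (π a) (V h))) (ρ (π b) (V k))
      = inner ℂ (T (ρ (star (π b) * π a) (V h))) (V k) :=
        inner_apply_map_apply_map_of_mem_centralizer ρ hT _ _ _ _
    _ = inner ℂ (conjMap V T (ρ (star (π b) * π a)) h) k := (adjoint_inner_left V _ _).symm
    _ = (l : ℂ) * inner ℂ (φ₁ (star (π b) * π a) h) k := by
        rw [hTφ₁_apply, smul_apply, inner_smul_left, Complex.conj_ofReal]
    _ = (l : ℂ) * inner ℂ (φ (star (π b) * π a) h) k := by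
        rw [inner_apply_star_mul_of_fixes π φ₁ hφ₁π, inner_apply_star_mul_of_fixes π φ hφπ]
    _ = (l : ℂ) * inner ℂ (ρ (star (π b) * π a) (V h)) (V k) := by
        rw [hdil]
        exact congrArg _ (adjoint_inner_left V _ _)
    _ = (l : ℂ) * inner ℂ (ρ (π a) (V h)) (ρ (π b) (V k)) := by
        simpa using congrArg ((l : ℂ) * ·)
          (inner_apply_map_apply_map_of_mem_centralizer ρ Set.one_mem_centralizer _ _ _ _).symm

/-- writing `λφ₁ = V* T ρ(·) V` via Arveson's Radon–Nikodym theorem, the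
compression of `T` to `[ρ(π(A))VH]` is `λ` times the identity of that subspace. -/
theorem compression_is_scalar
    (π : A →⋆ₐ[ℂ] (H →L[ℂ] H)) (hπ : Nondeg π) (hne : (WeakExp π).Nonempty)
    (φ : (H →L[ℂ] H) →ₗ[ℂ] (H →L[ℂ] H)) (hφ : φ ∈ WeakExp π)
    (ρ : (H →L[ℂ] H) →⋆ₐ[ℂ] (K →L[ℂ] K)) (V : H →L[ℂ] K)
    (hdil : ∀ S, φ S = (adjoint V) ∘L ((ρ S) ∘L V))
    (hmin : (Submodule.span ℂ
      {x : K | ∃ S : H →L[ℂ] H, ∃ h : H, ρ S (V h) = x}).topologicalClosure = ⊤)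
    (φ₁ φ₂ : (H →L[ℂ] H) →ₗ[ℂ] (H →L[ℂ] H)) (hφ₁ : φ₁ ∈ WeakExp π) (hφ₂ : φ₂ ∈ WeakExp π)
    (l : ℝ) (hl0 : 0 < l) (hl1 : l < 1)
    (hconv : φ = (l : ℂ) • φ₁ + ((1 - l : ℝ) : ℂ) • φ₂)
    (T : K →L[ℂ] K) (hT : T ∈ Set.centralizer (Set.range (⇑ρ)))
    (hT0 : 0 ≤ T) (hT1 : T ≤ 1)
    (hTφ₁ : (conjMap V T).comp ρ.toLinearMap = (l : ℂ) • φ₁) :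
    ∀ x ∈ (Submodule.span ℂ
        {x : K | ∃ a, ∃ h : H, ρ (π a) (V h) = x}).topologicalClosure,
    ∀ y ∈ (Submodule.span ℂ
        {x : K | ∃ a, ∃ h : H, ρ (π a) (V h) = x}).topologicalClosure,
      (inner ℂ (T x) y : ℂ) = (l : ℂ) * (inner ℂ x y : ℂ) :=
  compression_is_scalar_general π φ hφ ρ V hdil φ₁ hφ₁ l T hT hTφ₁
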